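/- Let M be a faithful multiplication R-module and I an ideal of R. Then 𝔓_I·M ⊆ 𝔓_{IM}, where 𝔓_I is the intersection of all minimal prime ideals of R containing I and 𝔓_{IM} is the intersection of all minimal prime submodules of M containing IM. If moreover M is finitely generated, then 𝔓_I·M = 𝔓_{IM}. -/

import Mathlib

variable {R : Type*} [CommRing R] {M : Type*} [AddCommGroup M] [Module R M]

/-- `M` is a multiplication module: every submodule is `IM` for some ideal `I`. -/
def IsMultiplicationModule (R M : Type*) [CommRing R] [AddCommGroup M] [Module R M] : Prop :=
  ∀ N : Submodule R M, ∃ I : Ideal R, N = I • (⊤ : Submodule R M)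

/-- A prime submodule. -/
def Submodule.IsPrimeSubmodule (P : Submodule R M) : Prop :=
  P ≠ ⊤ ∧ ∀ (r : R) (m : M), r • m ∈ P → m ∈ P ∨ r ∈ P.colon ⊤

/-- `M` is reduced: the intersection of all prime submodules is zero. -/
def IsReducedModule (R M : Type*) [CommRing R] [AddCommGroup M] [Module R M] : Prop :=
  sInf {P : Submodule R M | P.IsPrimeSubmodule} = ⊥

/-- A minimal prime submodule of `M`. -/
def Submodule.IsMinimalPrime (P : Submodule R M) : Prop :=
  P.IsPrimeSubmodule ∧ ∀ Q : Submodule R M, Q.IsPrimeSubmodule → Q ≤ P → Q = P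

/-- `𝔓_K`: the intersection of all minimal prime submodules containing `K`
(equal to `M` if there are none). -/
def primeRad (K : Submodule R M) : Submodule R M :=
  sInf {P : Submodule R M | P.IsMinimalPrime ∧ K ≤ P}

/-- `V(K)`: the set of minimal prime submodules containing `K`. -/
def Vset (K : Submodule R M) : Set (Submodule R M) :=
  {P : Submodule R M | P.IsMinimalPrime ∧ K ≤ P}

/-- A quasi `z°`-submodule. -/
def IsQuasiZSubmodule (N : Submodule R M) : Prop :=
  N ≠ ⊤ ∧ ∀ a ∈ N.colon ⊤, primeRad (Ideal.span {a} • (⊤ : Submodule R M)) ≤ N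

/-- `𝔓_I` for an ideal: intersection of all minimal prime ideals of `R` containing `I`. -/
def idealPrimeRad (I : Ideal R) : Ideal R :=
  sInf {p : Ideal R | p ∈ minimalPrimes R ∧ I ≤ p}

/-- A `z°`-ideal of `R`. -/
def IsZIdeal (I : Ideal R) : Prop :=
  I ≠ ⊤ ∧ ∀ a ∈ I, idealPrimeRad (Ideal.span {a}) ≤ I

/-- `(0 :_M J)` for an ideal `J`. -/
def pointAnn (J : Ideal R) : Submodule R M where
  carrier := {m : M | ∀ j ∈ J, j • m = 0}
  zero_mem' := by intro j _; simp
  add_mem' := by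
    intro a b ha hb j hj
    rw [smul_add, ha j hj, hb j hj, add_zero]
  smul_mem' := by
    intro c m hm j hj
    rw [smul_comm, hm j hj, smul_zero]

/-!
In a faithful multiplication module every submodule is `N = (N : M) M`, and for a prime `p`
with `p M ≠ M` the submodule `p M` is prime with `(p M : M) = p`. Hence `P ↦ (P : M)` and
`q ↦ q M` are inverse bijections between the minimal prime submodules of `M` and the minimal
primes `q` of `R` with `q M ≠ M`, which gives the inclusion. When `M` is finitely generated,
Nakayama's lemma and faithfulness give `q M ≠ M` for every proper `q`, so every minimal prime
containing `I` contributes to `𝔓_{IM}` and the inclusion becomes an equality.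
-/

open Submodule

theorem le_primeRad {N K : Submodule R M}
    (h : ∀ P : Submodule R M, P.IsMinimalPrime → K ≤ P → N ≤ P) : N ≤ primeRad K :=
  le_sInf fun P hP => h P hP.1 hP.2

theorem primeRad_le {K P : Submodule R M} (hP : P.IsMinimalPrime) (hKP : K ≤ P) :
    primeRad K ≤ P :=
  sInf_le ⟨hP, hKP⟩

theorem le_idealPrimeRad {J I : Ideal R} (h : ∀ p ∈ minimalPrimes R, I ≤ p → J ≤ p) :
    J ≤ idealPrimeRad I :=
  le_sInf fun p hp => h p hp.1 hp.2

theorem idealPrimeRad_le {I p : Ideal R} (hp : p ∈ minimalPrimes R) (hIp : I ≤ p) :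
    idealPrimeRad I ≤ p :=
  sInf_le ⟨hp, hIp⟩

theorem Ideal.le_colon_smul_top (I : Ideal R) : I ≤ (I • (⊤ : Submodule R M)).colon ⊤ :=
  fun _ ha => mem_colon.mpr fun _ _ => smul_mem_smul ha mem_top

theorem eq_zero_of_forall_smul_eq_zero (hfaithful : (⊥ : Submodule R M).colon ⊤ = ⊥) {r : R}
    (h : ∀ y : M, r • y = 0) : r = 0 := by
  have hr : r ∈ (⊥ : Submodule R M).colon ⊤ := mem_colon.mpr fun y _ => (mem_bot R).mpr (h y)
  rwa [hfaithful, Ideal.mem_bot] at hr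

theorem Submodule.IsPrimeSubmodule.isPrime_colon {P : Submodule R M} (hP : P.IsPrimeSubmodule) :
    (P.colon ⊤).IsPrime where
  ne_top' h := hP.1 (eq_top_iff'.mpr fun m => (colon_eq_top_iff_subset _).mp h trivial)
  mem_or_mem' {a b} hab := by
    refine or_iff_not_imp_right.mpr fun hb => ?_
    obtain ⟨m, -, hm⟩ := not_forall₂.mp (mt mem_colon.mpr hb)
    exact (hP.2 a (b • m) (by rw [smul_smul]; exact mem_colon.mp hab m trivial)).resolve_left hm

namespace IsMultiplicationModule

theorem colon_smul_top (hmul : IsMultiplicationModule R M) (N : Submodule R M) :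
    N.colon ⊤ • (⊤ : Submodule R M) = N := by
  obtain ⟨I, rfl⟩ := hmul N
  refine le_antisymm (smul_le.mpr fun r hr n _ => mem_colon.mp hr n trivial) ?_
  exact smul_mono_left I.le_colon_smul_top

theorem mem_colon_span_singleton_smul_top (hmul : IsMultiplicationModule R M) (x : M) :
    x ∈ (span R {x}).colon ⊤ • (⊤ : Submodule R M) := by
  rw [hmul.colon_smul_top]
  exact mem_span_singleton_self x

theorem smul_top_eq_top_of_forall_colon_le (hmul : IsMultiplicationModule R M) {J : Ideal R}
    (h : ∀ x : M, (span R {x}).colon ⊤ ≤ J) : J • (⊤ : Submodule R M) = ⊤ :=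
  eq_top_iff.mpr fun x _ => smul_mono_left (h x) (hmul.mem_colon_span_singleton_smul_top x)

theorem smul_eq_self_of_smul_top_eq_top (hmul : IsMultiplicationModule R M) {J : Ideal R}
    (hJ : J • (⊤ : Submodule R M) = ⊤) (N : Submodule R M) : J • N = N := by
  conv_lhs => rw [← hmul.colon_smul_top N]
  rw [← smul_assoc, smul_eq_mul, mul_comm, ← smul_eq_mul, smul_assoc, hJ, hmul.colon_smul_top]

end IsMultiplicationModule

/-- `t (p M) ⊆ p (R x)`, and faithfulness turns the resulting relation `(t c - d) x = 0`
into `(t c - d) t = 0`. -/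
theorem Ideal.IsPrime.mem_of_smul_mem_smul_top (hfaithful : (⊥ : Submodule R M).colon ⊤ = ⊥)
    {p : Ideal R} (hp : p.IsPrime) {x : M} {t c : R} (ht : t ∈ (Submodule.span R {x}).colon ⊤)
    (htp : t ∉ p) (hc : c • x ∈ p • (⊤ : Submodule R M)) : c ∈ p := by
  have htc : t • c • x ∈ p • Submodule.span R {x} := by
    refine smul_induction_on (p := fun z => t • z ∈ p • Submodule.span R {x}) hc
      (fun a ha y _ => ?_) (fun y z hy hz => ?_)
    · rw [smul_comm]
      exact smul_mem_smul ha (mem_colon.mp ht y trivial)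
    · rw [smul_add]
      exact add_mem hy hz
  obtain ⟨d, hdp, hd⟩ := mem_smul_span_singleton.mp htc
  have hx : (t * c - d) • x = 0 := by rw [sub_smul, mul_smul, hd, sub_self]
  have hkill : (t * c - d) * t = 0 := eq_zero_of_forall_smul_eq_zero hfaithful fun y => by
    obtain ⟨e, he⟩ := Submodule.mem_span_singleton.mp (mem_colon.mp ht y trivial)
    rw [mul_smul, ← he, smul_comm, hx, smul_zero]
  have hsub : t * c - d ∈ p := (hp.mem_or_mem (hkill ▸ p.zero_mem)).resolve_right htp
  have htc : t * c ∈ p := by simpa using p.add_mem hsub hdp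
  exact (hp.mem_or_mem htc).resolve_left htp

/-- Put `J = (p M : m)`. If `J ⊇ (R x : M)` for all `x`, then `J M = M`, so `m ∈ J m ⊆ p M`.
Otherwise some `t ∉ J` maps `M` into a cyclic `R x`; writing `t m = c x`, primality forces
`c ∈ p`, whence `t m ∈ p M`, i.e. `t ∈ J`. -/
theorem Ideal.IsPrime.mem_smul_top_or_mem_of_smul_mem
    (hfaithful : (⊥ : Submodule R M).colon ⊤ = ⊥) (hmul : IsMultiplicationModule R M)
    {p : Ideal R} (hp : p.IsPrime) {r : R} {m : M} (hrm : r • m ∈ p • (⊤ : Submodule R M)) :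
    m ∈ p • (⊤ : Submodule R M) ∨ r ∈ p := by
  refine or_iff_not_imp_right.mpr fun hr => ?_
  set J := (p • (⊤ : Submodule R M)).colon {m}
  by_cases h : ∀ x : M, (Submodule.span R {x}).colon ⊤ ≤ J
  · have hm : m ∈ J • Submodule.span R {m} := by
      rw [hmul.smul_eq_self_of_smul_top_eq_top (hmul.smul_top_eq_top_of_forall_colon_le h)]
      exact Submodule.mem_span_singleton_self m
    obtain ⟨c, hc, hcm⟩ := mem_smul_span_singleton.mp hm
    rw [← hcm]
    exact mem_colon_singleton.mp hc
  · obtain ⟨x, hx⟩ := not_forall.mp h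
    obtain ⟨t, ht, htJ⟩ := SetLike.not_le_iff_exists.mp hx
    obtain ⟨c, hc⟩ := Submodule.mem_span_singleton.mp (mem_colon.mp ht m trivial)
    have htp : t ∉ p := fun htp => htJ (mem_colon_singleton.mpr (smul_mem_smul htp mem_top))
    have hrc : r * c ∈ p := hp.mem_of_smul_mem_smul_top hfaithful ht htp <| by
      rw [mul_smul, hc, smul_comm]
      exact smul_mem _ t hrm
    have hcp : c ∈ p := (hp.mem_or_mem hrc).resolve_left hr
    exact (htJ (mem_colon_singleton.mpr (hc ▸ smul_mem_smul hcp mem_top))).elim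

theorem Ideal.IsPrime.colon_smul_top_eq (hfaithful : (⊥ : Submodule R M).colon ⊤ = ⊥)
    (hmul : IsMultiplicationModule R M) {p : Ideal R} (hp : p.IsPrime)
    (hne : p • (⊤ : Submodule R M) ≠ ⊤) : (p • (⊤ : Submodule R M)).colon ⊤ = p := by
  refine le_antisymm (fun r hr => ?_) p.le_colon_smul_top
  obtain ⟨m, -, hm⟩ := SetLike.exists_of_lt (lt_top_iff_ne_top.mpr hne)
  exact (hp.mem_smul_top_or_mem_of_smul_mem hfaithful hmul (mem_colon.mp hr m trivial)).resolve_left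
    hm

theorem Ideal.IsPrime.isPrimeSubmodule_smul_top (hfaithful : (⊥ : Submodule R M).colon ⊤ = ⊥)
    (hmul : IsMultiplicationModule R M) {p : Ideal R} (hp : p.IsPrime)
    (hne : p • (⊤ : Submodule R M) ≠ ⊤) :
    (p • (⊤ : Submodule R M)).IsPrimeSubmodule := by
  refine ⟨hne, fun r m hrm => ?_⟩
  rw [hp.colon_smul_top_eq hfaithful hmul hne]
  exact hp.mem_smul_top_or_mem_of_smul_mem hfaithful hmul hrm

theorem Ideal.isMinimalPrime_smul_top (hfaithful : (⊥ : Submodule R M).colon ⊤ = ⊥)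
    (hmul : IsMultiplicationModule R M) {q : Ideal R} (hq : q ∈ minimalPrimes R)
    (hne : q • (⊤ : Submodule R M) ≠ ⊤) : (q • (⊤ : Submodule R M)).IsMinimalPrime := by
  refine ⟨hq.1.1.isPrimeSubmodule_smul_top hfaithful hmul hne, fun P hP hPq => ?_⟩
  have hPq' : P.colon ⊤ ≤ q :=
    (colon_mono hPq subset_rfl).trans_eq (hq.1.1.colon_smul_top_eq hfaithful hmul hne)
  rw [← hmul.colon_smul_top P, le_antisymm hPq' (hq.2 ⟨hP.isPrime_colon, bot_le⟩ hPq')]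

theorem Submodule.IsMinimalPrime.colon_mem_minimalPrimes
    (hfaithful : (⊥ : Submodule R M).colon ⊤ = ⊥) (hmul : IsMultiplicationModule R M)
    {P : Submodule R M} (hP : P.IsMinimalPrime) : P.colon ⊤ ∈ minimalPrimes R := by
  have := hP.1.isPrime_colon
  obtain ⟨q, hq, hqP⟩ := Ideal.exists_minimalPrimes_le (bot_le : ⊥ ≤ P.colon ⊤)
  have hqle : q • (⊤ : Submodule R M) ≤ P :=
    (smul_mono_left hqP).trans_eq (hmul.colon_smul_top P)
  have hne : q • (⊤ : Submodule R M) ≠ ⊤ := ne_top_of_le_ne_top hP.1.1 hqle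
  rw [← hP.2 _ (hq.1.1.isPrimeSubmodule_smul_top hfaithful hmul hne) hqle,
    hq.1.1.colon_smul_top_eq hfaithful hmul hne]
  exact hq

theorem Ideal.smul_top_ne_top [Module.Finite R M]
    (hfaithful : (⊥ : Submodule R M).colon ⊤ = ⊥) {J : Ideal R} (hJ : J ≠ ⊤) :
    J • (⊤ : Submodule R M) ≠ ⊤ := by
  intro h
  obtain ⟨r, hr1, hr0⟩ := exists_sub_one_mem_and_smul_eq_zero_of_fg_of_le_smul J ⊤
    Module.Finite.fg_top h.ge
  obtain rfl : r = 0 := eq_zero_of_forall_smul_eq_zero hfaithful fun y => hr0 y trivial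
  exact hJ ((Ideal.eq_top_iff_one _).mpr (by simpa using J.neg_mem hr1))

theorem stmt7 (hfaithful : (⊥ : Submodule R M).colon ⊤ = ⊥)
    (hmul : IsMultiplicationModule R M) (I : Ideal R) :
    idealPrimeRad I • (⊤ : Submodule R M) ≤ primeRad (I • (⊤ : Submodule R M)) ∧
      (Module.Finite R M →
        idealPrimeRad I • (⊤ : Submodule R M) = primeRad (I • (⊤ : Submodule R M))) := by
  have hle :
      idealPrimeRad I • (⊤ : Submodule R M) ≤ primeRad (I • (⊤ : Submodule R M)) := by
    refine le_primeRad fun P hP hIP => ?_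
    have hIP' : I ≤ P.colon ⊤ := I.le_colon_smul_top.trans (colon_mono hIP subset_rfl)
    calc idealPrimeRad I • ⊤
        ≤ P.colon ⊤ • ⊤ :=
          smul_mono_left (idealPrimeRad_le (hP.colon_mem_minimalPrimes hfaithful hmul) hIP')
      _ = P := hmul.colon_smul_top P
  refine ⟨hle, fun _ => hle.antisymm fun x hx => ?_⟩
  have hx' : (span R {x}).colon ⊤ ≤ idealPrimeRad I := by
    refine le_idealPrimeRad fun q hq hIq => ?_
    have hne : q • (⊤ : Submodule R M) ≠ ⊤ := q.smul_top_ne_top hfaithful hq.1.1.ne_top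
    have hxq : x ∈ q • (⊤ : Submodule R M) :=
      primeRad_le (q.isMinimalPrime_smul_top hfaithful hmul hq hne) (smul_mono_left hIq) hx
    rw [← hq.1.1.colon_smul_top_eq hfaithful hmul hne]
    exact colon_mono ((span_singleton_le_iff_mem x _).mpr hxq) subset_rfl
  exact smul_mono_left hx' (hmul.mem_colon_span_singleton_smul_top x)
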